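/- Let Γ be a strongly regular graph srg(v, k, λ, μ) with μ = λ + 1, and let A₁ be its adjacency matrix and A₂ = J − I − A₁. Then the 2v×2v matrix N = circ(A₁, A₂) (block circulant with first block row (A₁, A₂)) satisfies NNᵀ = (v−1)(I₂⊗I_v) + (v−2k+2λ)(I₂⊗(J−I)_v) + 0·((J−I)₂⊗I_v) + 2(k−λ−1)((J−I)₂⊗(J−I)_v); hence N is the incidence matrix of a symmetric rectangular design with parameters v₁ = 2v, k₁ = v−1, λ₁ = v−2k+2λ, λ₂ = 0, λ₃ = 2(k−λ−1), m = 2, n = v. -/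

import Mathlib

open Matrix Kronecker Finset

def Jmat (m : ℕ) : Matrix (Fin m) (Fin m) ℝ := Matrix.of fun _ _ => 1

/-!
Write `J₂ - 1` for the swap matrix of order 2. Then `circ(A₁, A₂) = I₂ ⊗ A₁ + (J₂ - 1) ⊗ A₂`, and
since `(J₂ - 1)² = I₂` and both `A₁`, `A₂` are symmetric,
`N Nᵀ = I₂ ⊗ (A₁² + A₂²) + (J₂ - 1) ⊗ (A₁A₂ + A₂A₁)`.
Expanding `A₂ = J - I - A₁` with `A₁J = JA₁ = kJ`, `J² = vJ` and the srg relation with `μ = λ + 1`,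
the two blocks become `(v - 1)I + (v - 2k + 2λ)(J - I)` and `2(k - λ - 1)(J - I)`.
-/

section AllOnes

variable {m : ℕ}

theorem Jmat_transpose : (Jmat m)ᵀ = Jmat m := rfl

theorem Jmat_mul_Jmat : Jmat m * Jmat m = (m : ℝ) • Jmat m := by
  ext x y
  simp [Jmat, mul_apply]

theorem mul_Jmat_of_row_sum {A : Matrix (Fin m) (Fin m) ℝ} {k : ℝ} (hreg : ∀ x, ∑ y, A x y = k) :
    A * Jmat m = k • Jmat m := by
  ext x y
  simp [Jmat, mul_apply, hreg x]

theorem Jmat_mul_of_row_sum_of_symm {A : Matrix (Fin m) (Fin m) ℝ} {k : ℝ} (hsymm : Aᵀ = A)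
    (hreg : ∀ x, ∑ y, A x y = k) : Jmat m * A = k • Jmat m := by
  calc Jmat m * A = (Aᵀ * Jmat m)ᵀ := by rw [transpose_mul, Jmat_transpose, transpose_transpose]
    _ = k • Jmat m := by rw [hsymm, mul_Jmat_of_row_sum hreg, transpose_smul, Jmat_transpose]

theorem Jmat_sub_one_transpose : (Jmat m - 1)ᵀ = Jmat m - 1 := by
  rw [transpose_sub, Jmat_transpose, transpose_one]

theorem Jmat_sub_one_sub_transpose {A : Matrix (Fin m) (Fin m) ℝ} (hsymm : Aᵀ = A) :
    (Jmat m - 1 - A)ᵀ = Jmat m - 1 - A := by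
  rw [transpose_sub, Jmat_sub_one_transpose, hsymm]

theorem Jmat_two_sub_one_mul_self : (Jmat 2 - 1) * (Jmat 2 - 1) = 1 := by
  ext i j
  fin_cases i <;> fin_cases j <;> simp [Jmat, mul_apply, one_apply, Fin.sum_univ_two]

end AllOnes

section SRG

variable {v : ℕ} {k lam : ℝ} {A : Matrix (Fin v) (Fin v) ℝ}

theorem srg_sq_add_compl_sq (hAJ : A * Jmat v = k • Jmat v) (hJA : Jmat v * A = k • Jmat v)
    (hsrg : A * A = k • (1 : Matrix (Fin v) (Fin v) ℝ) + lam • A + (lam + 1) • (Jmat v - 1 - A)) :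
    A * A + (Jmat v - 1 - A) * (Jmat v - 1 - A)
      = ((v : ℝ) - 1) • (1 : Matrix (Fin v) (Fin v) ℝ) + ((v : ℝ) - 2 * k + 2 * lam) • (Jmat v - 1) := by
  simp only [mul_sub, sub_mul, mul_one, one_mul, hsrg, hAJ, hJA, Jmat_mul_Jmat]
  module

theorem srg_mul_compl_add_compl_mul (hAJ : A * Jmat v = k • Jmat v)
    (hJA : Jmat v * A = k • Jmat v)
    (hsrg : A * A = k • (1 : Matrix (Fin v) (Fin v) ℝ) + lam • A + (lam + 1) • (Jmat v - 1 - A)) :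
    A * (Jmat v - 1 - A) + (Jmat v - 1 - A) * A = (2 * (k - lam - 1)) • (Jmat v - 1) := by
  simp only [mul_sub, sub_mul, mul_one, one_mul, hsrg, hAJ, hJA]
  module

end SRG

section BlockCirculant

variable {n R : Type*}

def blockCirc₂ (A B : Matrix n n R) : Matrix (Fin 2 × n) (Fin 2 × n) R :=
  fun p q => ![A, B] (q.1 - p.1) p.2 q.2

theorem blockCirc₂_eq_kronecker (A B : Matrix n n ℝ) :
    blockCirc₂ A B = (1 : Matrix (Fin 2) (Fin 2) ℝ) ⊗ₖ A + (Jmat 2 - 1) ⊗ₖ B := by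
  ext ⟨a, x⟩ ⟨b, y⟩
  fin_cases a <;> fin_cases b <;> simp [blockCirc₂, Jmat, one_apply] <;> rfl

theorem blockCirc₂_mul_transpose [Fintype n] (A B : Matrix n n ℝ) :
    blockCirc₂ A B * (blockCirc₂ A B)ᵀ
      = (1 : Matrix (Fin 2) (Fin 2) ℝ) ⊗ₖ (A * Aᵀ + B * Bᵀ) + (Jmat 2 - 1) ⊗ₖ (A * Bᵀ + B * Aᵀ) := by
  simp only [blockCirc₂_eq_kronecker, transpose_add, ← kroneckerMap_transpose, transpose_one,
    Jmat_sub_one_transpose, add_mul, mul_add, ← mul_kronecker_mul, one_mul, mul_one,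
    Jmat_two_sub_one_mul_self, kronecker_add]
  abel

end BlockCirculant

theorem srg_to_RD_general (v : ℕ) (k lam : ℝ)
    (A₁ : Matrix (Fin v) (Fin v) ℝ)
    (hsymm : A₁ᵀ = A₁)
    (hreg : ∀ x, ∑ y, A₁ x y = k)
    (hsrg : A₁ * A₁ = k • (1 : Matrix (Fin v) (Fin v) ℝ) + lam • A₁
      + (lam + 1) • (Jmat v - 1 - A₁))
    (A₂ : Matrix (Fin v) (Fin v) ℝ) (hA₂ : A₂ = Jmat v - 1 - A₁)
    (N : Matrix (Fin 2 × Fin v) (Fin 2 × Fin v) ℝ)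
    (hN : N = fun p q => (![A₁, A₂] (q.1 - p.1)) p.2 q.2) :
    N * Nᵀ =
      ((v : ℝ) - 1) • ((1 : Matrix (Fin 2) (Fin 2) ℝ) ⊗ₖ (1 : Matrix (Fin v) (Fin v) ℝ))
      + ((v : ℝ) - 2 * k + 2 * lam) • ((1 : Matrix (Fin 2) (Fin 2) ℝ) ⊗ₖ (Jmat v - 1))
      + (0 : ℝ) • ((Jmat 2 - 1) ⊗ₖ (1 : Matrix (Fin v) (Fin v) ℝ))
      + (2 * (k - lam - 1)) • ((Jmat 2 - 1) ⊗ₖ (Jmat v - 1)) := by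
  have hAJ := mul_Jmat_of_row_sum hreg
  have hJA := Jmat_mul_of_row_sum_of_symm hsymm hreg
  have hN' : N = blockCirc₂ A₁ A₂ := hN
  subst hA₂ hN'
  rw [blockCirc₂_mul_transpose, hsymm, Jmat_sub_one_sub_transpose hsymm,
    srg_sq_add_compl_sq hAJ hJA hsrg, srg_mul_compl_add_compl_mul hAJ hJA hsrg,
    kronecker_add, kronecker_smul, kronecker_smul, kronecker_smul, zero_smul, add_zero]

/-- Theorem 8(i): for a strongly regular graph
`srg(v, k, λ, μ)` with `μ = λ + 1` and adjacency matrix `A₁`,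
`N = circ(A₁, A₂)` with `A₂ = J − I − A₁` is the incidence matrix of a
symmetric rectangular design with `v₁ = 2v`, `k₁ = v−1`, `λ₁ = v−2k+2λ`,
`λ₂ = 0`, `λ₃ = 2(k−λ−1)`, `m = 2`, `n = v`. -/
theorem srg_to_RD (v : ℕ) (k lam : ℝ)
    (A₁ : Matrix (Fin v) (Fin v) ℝ)
    (hsymm : A₁ᵀ = A₁)
    (h01 : ∀ x y, A₁ x y = 0 ∨ A₁ x y = 1)
    (hdiag : ∀ x, A₁ x x = 0)
    (hreg : ∀ x, ∑ y, A₁ x y = k)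
    (hsrg : A₁ * A₁ = k • (1 : Matrix (Fin v) (Fin v) ℝ) + lam • A₁
      + (lam + 1) • (Jmat v - 1 - A₁))
    (A₂ : Matrix (Fin v) (Fin v) ℝ) (hA₂ : A₂ = Jmat v - 1 - A₁)
    (N : Matrix (Fin 2 × Fin v) (Fin 2 × Fin v) ℝ)
    (hN : N = fun p q => (![A₁, A₂] (q.1 - p.1)) p.2 q.2) :
    N * Nᵀ =
      ((v : ℝ) - 1) • ((1 : Matrix (Fin 2) (Fin 2) ℝ) ⊗ₖ (1 : Matrix (Fin v) (Fin v) ℝ))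
      + ((v : ℝ) - 2 * k + 2 * lam) • ((1 : Matrix (Fin 2) (Fin 2) ℝ) ⊗ₖ (Jmat v - 1))
      + (0 : ℝ) • ((Jmat 2 - 1) ⊗ₖ (1 : Matrix (Fin v) (Fin v) ℝ))
      + (2 * (k - lam - 1)) • ((Jmat 2 - 1) ⊗ₖ (Jmat v - 1)) :=
  srg_to_RD_general v k lam A₁ hsymm hreg hsrg A₂ hA₂ N hN
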